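/- arXiv:2602.03363 — 2 statements merged into one kernel-verified Lean document; each statement's English description precedes it below -/
import Mathlib

section
/- Let M be a matroid on N_n whose rank function spans an extreme ray of Γ_n, with r_M(N_n) = 2, and suppose there exists i ∈ N_n \ {1,2} such that {1,2,i} is a circuit of M and every j ∈ N_n \ {1,2,i} is either parallel to i in M or a loop of M. If v ∈ χ_M, log(v−1) < a ≤ log v, and a + b ≥ log v (with b ≥ 0), then a·r_M + b·r_{U_{1,2}^n} is entropic. -/
/-!
Up to loops, `M` is the parallel extension of `U_{2,3}` with classes `{1}`, `{2}` and the
elements parallel to `i`. Take independent `u` uniform on `ℤ/v`, `y` on `ℤ/v` with entropy `a`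
(possible as `0 ≤ a ≤ log v`) and `w` with entropy `a + b - log v ≥ 0`, and put `X₁ = (u, w)`,
`X₂ = (u + y, w)`, `Xⱼ = y` on the class of `i` and `Xⱼ` constant on loops. Since `u + y` is
again uniform and independent of `(y, w)`, both `X₁` and `X₂` have entropy `a + b`, the class of
`i` has entropy `a`, and any two classes together determine `(u, w, y)`, of entropy `2a + b`:
these are the values of `a • r_M + b • r_{U_{1,2}}`.
-/

open Finset

/-- Shannon entropy (natural log) of the random variable `X : Ω → S`
under the probability mass function `p : Ω → ℝ`. -/
noncomputable def Hent {Ω S : Type} [Fintype Ω] [DecidableEq S]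
    (p : Ω → ℝ) (X : Ω → S) : ℝ :=
  ∑ s ∈ Finset.univ.image X,
    Real.negMulLog (∑ ω ∈ Finset.univ.filter (fun ω => X ω = s), p ω)

/-- The joint random variable `(X_i)_{i ∈ A}`. -/
def joint {Ω : Type} {n : ℕ} (X : Fin n → Ω → ℕ) (A : Finset (Fin n)) :
    Ω → (A → ℕ) :=
  fun ω i => X i ω

/-- A set function `h : 2^{N_n} → ℝ` is entropic if it is the entropy function of
some random vector `(X_1, …, X_n)` on a finite probability space. -/
def IsEntropic {n : ℕ} (h : Finset (Fin n) → ℝ) : Prop :=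
  ∃ (N : ℕ) (p : Fin N → ℝ) (X : Fin n → Fin N → ℕ),
    (∀ ω, 0 ≤ p ω) ∧ (∑ ω, p ω) = 1 ∧
    ∀ A : Finset (Fin n), h A = Hent p (joint X A)

/-- The polymatroidal region Γ_n. -/
def PolymatroidRegion (n : ℕ) : Set (Finset (Fin n) → ℝ) :=
  {h | h ∅ = 0 ∧ (∀ A, 0 ≤ h A) ∧ (∀ A B, A ⊆ B → h A ≤ h B) ∧
       (∀ A B, h (A ∩ B) + h (A ∪ B) ≤ h A + h B)}

/-- A nonzero `h ∈ Γ_n` spans an extreme ray of `Γ_n` if whenever `h₁, h₂ ∈ Γ_n` and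
`h₁ + h₂` is a nonnegative multiple of `h`, both `h₁` and `h₂` are nonnegative
multiples of `h`. -/
def SpansExtremeRay {n : ℕ} (h : Finset (Fin n) → ℝ) : Prop :=
  h ∈ PolymatroidRegion n ∧ h ≠ 0 ∧
  ∀ h₁ h₂ : Finset (Fin n) → ℝ, h₁ ∈ PolymatroidRegion n → h₂ ∈ PolymatroidRegion n →
    (∃ c : ℝ, 0 ≤ c ∧ h₁ + h₂ = c • h) →
    (∃ c₁ : ℝ, 0 ≤ c₁ ∧ h₁ = c₁ • h) ∧ (∃ c₂ : ℝ, 0 ≤ c₂ ∧ h₂ = c₂ • h)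

/-- `F ⊆ Γ_n` is a face of `Γ_n` if whenever `h₁, h₂ ∈ Γ_n` and `h₁ + h₂ ∈ F`,
both `h₁` and `h₂` lie in `F`. -/
def IsFace (n : ℕ) (F : Set (Finset (Fin n) → ℝ)) : Prop :=
  F ⊆ PolymatroidRegion n ∧
  ∀ h₁ h₂ : Finset (Fin n) → ℝ, h₁ ∈ PolymatroidRegion n → h₂ ∈ PolymatroidRegion n →
    h₁ + h₂ ∈ F → h₁ ∈ F ∧ h₂ ∈ F

/-- A matroid on ground set `N_n`, given by its rank function. -/
structure MatroidRk (n : ℕ) where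
  r : Finset (Fin n) → ℕ
  le_card : ∀ A, r A ≤ A.card
  mono : ∀ ⦃A B : Finset (Fin n)⦄, A ⊆ B → r A ≤ r B
  submod : ∀ A B : Finset (Fin n), r (A ∩ B) + r (A ∪ B) ≤ r A + r B

/-- The rank function of a matroid, viewed as a real-valued set function. -/
def MatroidRk.rr {n : ℕ} (M : MatroidRk n) : Finset (Fin n) → ℝ :=
  fun A => (M.r A : ℝ)

/-- A set is independent if its rank equals its cardinality. -/
def MatroidRk.Indep {n : ℕ} (M : MatroidRk n) (A : Finset (Fin n)) : Prop :=
  M.r A = A.card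

/-- A circuit is a minimal dependent set. -/
def MatroidRk.IsCircuit {n : ℕ} (M : MatroidRk n) (C : Finset (Fin n)) : Prop :=
  ¬ M.Indep C ∧ ∀ A ⊂ C, M.Indep A

/-- An element is a loop if its rank is zero. -/
def MatroidRk.IsLoop {n : ℕ} (M : MatroidRk n) (e : Fin n) : Prop :=
  M.r {e} = 0

/-- Two distinct elements are parallel if each has rank one and together they have rank one. -/
def MatroidRk.Parallel {n : ℕ} (M : MatroidRk n) (e f : Fin n) : Prop :=
  e ≠ f ∧ M.r {e} = 1 ∧ M.r {f} = 1 ∧ M.r {e, f} = 1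

/-- The subset `{1, …, k}` of `N_n` (in `Fin n`, the elements with value `< k`). -/
def alphaSet (n k : ℕ) : Finset (Fin n) :=
  Finset.univ.filter (fun i => (i : ℕ) < k)

/-- The rank function of the rank-one matroid `U_{1,k}^n`:
`A ↦ 1` if `A ∩ {1, …, k} ≠ ∅` and `0` otherwise. -/
def rUone (n k : ℕ) : Finset (Fin n) → ℝ :=
  fun A => if (A ∩ alphaSet n k).Nonempty then 1 else 0

/-- The rank function of the uniform matroid `U_{n-1,n}`: `A ↦ min (n-1) |A|`. -/
def rUnif (n : ℕ) : Finset (Fin n) → ℝ :=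
  fun A => ((min (n - 1) A.card : ℕ) : ℝ)

/-- The p-characteristic set `χ_M` of a matroid `M`. -/
def chi {n : ℕ} (M : MatroidRk n) : Set ℤ :=
  {v | 2 ≤ v ∧ IsEntropic (fun A => Real.log (v : ℝ) * M.rr A)}

open Real

section Entropy
variable {Ω Ω' S T : Type} [Fintype Ω] [Fintype Ω'] [DecidableEq S] [DecidableEq T]

theorem Hent_eq_sum_fiber (p : Ω → ℝ) (X : Ω → S) :
    Hent p X = ∑ ω, -(p ω * log (∑ ω' with X ω' = X ω, p ω')) := by
  rw [Hent, ← Finset.sum_fiberwise_of_maps_to (g := X) (t := univ.image X)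
    (fun ω _ => mem_image_of_mem X (mem_univ ω))]
  refine sum_congr rfl fun s _ => ?_
  rw [negMulLog, neg_mul, sum_mul, ← sum_neg_distrib]
  refine sum_congr rfl fun ω hω => ?_
  rw [(mem_filter.1 hω).2]

theorem Hent_congr_of_iff (p : Ω → ℝ) {X : Ω → S} {Y : Ω → T}
    (h : ∀ ω ω', X ω' = X ω ↔ Y ω' = Y ω) : Hent p X = Hent p Y := by
  simp only [Hent_eq_sum_fiber, h]

theorem Hent_comp_equiv (e : Ω' ≃ Ω) (p : Ω → ℝ) (X : Ω → S) :
    Hent (p ∘ e) (X ∘ e) = Hent p X := by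
  have fiber (s : S) : ∑ ω', (if X (e ω') = s then p (e ω') else 0) =
      ∑ ω, if X ω = s then p ω else 0 :=
    Equiv.sum_comp e fun ω => if X ω = s then p ω else 0
  simp only [Hent_eq_sum_fiber, Function.comp_apply, sum_filter, fiber]
  exact Equiv.sum_comp e (fun ω => -(p ω * log (∑ ω', if X ω' = X ω then p ω' else 0)))

theorem Hent_id [DecidableEq Ω] (p : Ω → ℝ) : Hent p id = ∑ ω, negMulLog (p ω) := by
  simp [Hent_eq_sum_fiber, negMulLog, filter_eq']

theorem Hent_const (p : Ω → ℝ) (hp : ∑ ω, p ω = 1) (s : S) : Hent p (fun _ => s) = 0 := by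
  simp [Hent_eq_sum_fiber, hp]

theorem Hent_joint_congr {n : ℕ} (p : Ω → ℝ) {X : Fin n → Ω → ℕ} {A : Finset (Fin n)}
    {Y : Ω → S} (h : ∀ ω ω', (∀ j ∈ A, X j ω' = X j ω) ↔ Y ω' = Y ω) :
    Hent p (joint X A) = Hent p Y :=
  Hent_congr_of_iff p fun ω ω' => by simp [← h, joint, funext_iff]

theorem isEntropic_of_fintype {n : ℕ} {h : Finset (Fin n) → ℝ} (p : Ω → ℝ) (X : Fin n → Ω → ℕ)
    (hp₀ : ∀ ω, 0 ≤ p ω) (hp₁ : ∑ ω, p ω = 1) (hX : ∀ A, h A = Hent p (joint X A)) :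
    IsEntropic h := by
  let e := (Fintype.equivFin Ω).symm
  exact ⟨Fintype.card Ω, p ∘ e, fun j => X j ∘ e, fun _ => hp₀ _,
    (Equiv.sum_comp e p).trans hp₁, fun A => (hX A).trans (Hent_comp_equiv e p _).symm⟩

end Entropy

section Product
variable {α β : Type} [Fintype α] [Fintype β] (q : α → ℝ) (r : β → ℝ)

theorem Hent_prod_id [DecidableEq α] [DecidableEq β] (hq : ∑ a, q a = 1) (hr : ∑ b, r b = 1) :
    Hent (fun x : α × β => q x.1 * r x.2) id = Hent q id + Hent r id := by
  simp only [Hent_id, negMulLog_mul, Fintype.sum_prod_type, sum_add_distrib, ← mul_sum,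
    ← sum_mul, hq, hr]
  ring

theorem Hent_prod_fst [DecidableEq α] (hr : ∑ b, r b = 1) :
    Hent (fun x : α × β => q x.1 * r x.2) Prod.fst = Hent q id := by
  have fiber (a : α) : ∑ x : α × β with x.1 = a, q x.1 * r x.2 = q a := by
    rw [sum_filter, Fintype.sum_prod_type]
    simp [← mul_sum, hr]
  have term (a : α) (b : β) : -(q a * r b * log (q a)) = r b * negMulLog (q a) := by
    rw [negMulLog]
    ring
  rw [Hent_id, Hent_eq_sum_fiber]
  simp only [fiber, Fintype.sum_prod_type, term, ← sum_mul, hr, one_mul]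

theorem Hent_prod_snd [DecidableEq β] (hq : ∑ a, q a = 1) :
    Hent (fun x : α × β => q x.1 * r x.2) Prod.snd = Hent r id := by
  rw [← Hent_comp_equiv (Equiv.prodComm β α), ← Hent_prod_fst r q hq]
  simp only [Function.comp_def, Equiv.prodComm_apply, Prod.fst_swap, Prod.snd_swap, mul_comm]

end Product

theorem Hent_uniform (V : ℕ) [NeZero V] : Hent (fun _ : Fin V => (V : ℝ)⁻¹) id = log V := by
  simp [Hent_id, negMulLog, log_inv, NeZero.ne V]

theorem exists_pmf_Hent_eq {m : ℕ} [NeZero m] {c : ℝ} (hc₀ : 0 ≤ c) (hc : c ≤ log m) :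
    ∃ q : Fin m → ℝ, (∀ x, 0 ≤ q x) ∧ ∑ x, q x = 1 ∧ Hent q id = c := by
  -- interpolate between the point mass at `0` (entropy `0`) and the uniform law (entropy `log m`)
  set q : ℝ → Fin m → ℝ := fun t x => t * (if x = 0 then 1 else 0) + (1 - t) * (m : ℝ)⁻¹
  have hm : (m : ℝ) ≠ 0 := Nat.cast_ne_zero.2 (NeZero.ne m)
  have hsum (t : ℝ) : ∑ x, q t x = 1 := by
    simp only [q, mul_ite, mul_one, mul_zero, sum_add_distrib, sum_ite_eq', mem_univ, if_true,
      sum_const, card_univ, Fintype.card_fin, nsmul_eq_mul]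
    field_simp
    ring
  have hcont : Continuous fun t => Hent (q t) id := by
    simp only [Hent_id]
    fun_prop
  have h₀ : Hent (q 0) id = log m := by simpa [q] using Hent_uniform m
  have h₁ : Hent (q 1) id = 0 := by simp [q, Hent_id, apply_ite negMulLog]
  obtain ⟨t, ⟨ht₀, ht₁⟩, hqt⟩ := intermediate_value_Icc' zero_le_one hcont.continuousOn
    (by rw [h₀, h₁]; exact ⟨hc₀, hc⟩ : c ∈ Set.Icc (Hent (q 1) id) (Hent (q 0) id))
  refine ⟨q t, fun x => ?_, hsum t, hqt⟩
  have : 0 ≤ 1 - t := by linarith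
  simp only [q]
  split_ifs <;> positivity

theorem exists_pmf_Hent_eq_of_nonneg {c : ℝ} (hc : 0 ≤ c) :
    ∃ (m : ℕ) (q : Fin m → ℝ), (∀ x, 0 ≤ q x) ∧ ∑ x, q x = 1 ∧ Hent q id = c := by
  have : NeZero ⌈exp c⌉₊ := ⟨(Nat.ceil_pos.2 (exp_pos c)).ne'⟩
  exact ⟨_, exists_pmf_Hent_eq hc
    ((le_log_iff_exp_le (Nat.cast_pos.2 (NeZero.pos _))).2 (Nat.le_ceil _))⟩

namespace MatroidRk
variable {n : ℕ} (M : MatroidRk n)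

theorem rank_empty : M.r ∅ = 0 := Nat.le_zero.1 (M.le_card ∅)

theorem rank_singleton_of_rank_pair_eq_two {x y : Fin n} (h : M.r {x, y} = 2) :
    M.r {x} = 1 := by
  have hsub := M.submod {x} {y}
  rw [← insert_eq, h] at hsub
  have := M.le_card {x}
  have := M.le_card {y}
  simp only [card_singleton] at *
  omega

theorem rank_insert_le_of_loop {j : Fin n} (hj : M.r {j} = 0) (S : Finset (Fin n)) :
    M.r (insert j S) ≤ M.r S := by
  have := M.submod {j} S
  rw [← insert_eq] at this
  omega

theorem rank_pair_le_of_rank_pair_le {x y z : Fin n} (h : M.r {z, y} ≤ M.r {z}) :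
    M.r {x, y} ≤ M.r {x, z} := by
  have hsub := M.submod {x, z} {z, y}
  have hinter := M.mono (show {z} ⊆ ({x, z} ∩ {z, y} : Finset (Fin n)) by simp)
  have hunion := M.mono (show {x, y} ⊆ ({x, z} ∪ {z, y} : Finset (Fin n)) by
    intro a; simp only [mem_insert, mem_singleton, mem_union]; tauto)
  omega

theorem rank_union_le_of_forall_rank_insert_le {S A : Finset (Fin n)}
    (h : ∀ j ∈ A, M.r (insert j S) ≤ M.r S) : M.r (A ∪ S) ≤ M.r S := by
  induction A using Finset.induction_on with
  | empty => simp
  | @insert j A hjA ih =>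
    have hA := ih fun k hk => h k (mem_insert_of_mem hk)
    have hsub := M.submod (A ∪ S) (insert j S)
    have hinter := M.mono (show S ⊆ (A ∪ S) ∩ insert j S from
      subset_inter subset_union_right (subset_insert j S))
    rw [show A ∪ S ∪ insert j S = insert j A ∪ S by ext; simp] at hsub
    have := h j (mem_insert_self j A)
    omega

theorem rank_eq_of_forall_rank_pair_le {x : Fin n} {A : Finset (Fin n)} (hx : x ∈ A)
    (h : ∀ j ∈ A, M.r {j, x} ≤ M.r {x}) : M.r A = M.r {x} := by
  have := M.rank_union_le_of_forall_rank_insert_le h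
  rw [union_comm, ← insert_eq, insert_eq_of_mem hx] at this
  exact le_antisymm this (M.mono (singleton_subset_iff.2 hx))

theorem rank_eq_of_forall_ne_loop {x : Fin n} {A : Finset (Fin n)} (hx : x ∈ A)
    (h : ∀ j ∈ A, j ≠ x → M.r {j} = 0) : M.r A = M.r {x} := by
  refine M.rank_eq_of_forall_rank_pair_le hx fun j hj => ?_
  by_cases hjx : j = x
  · simp [hjx]
  · exact M.rank_insert_le_of_loop (h j hj hjx) {x}

theorem rank_eq_zero_of_forall_loop {A : Finset (Fin n)} (h : ∀ j ∈ A, M.r {j} = 0) :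
    M.r A = 0 := by
  have := M.rank_union_le_of_forall_rank_insert_le (S := ∅) (A := A) (by simpa [rank_empty])
  simpa [rank_empty] using this

variable {M} in
theorem IsCircuit.rank_eq_card {C s : Finset (Fin n)} (hC : M.IsCircuit C) {z : Fin n}
    (hz : z ∉ s) (hs : insert z s ⊆ C) : M.r s = s.card :=
  hC.2 s (ssubset_iff.2 ⟨z, hz, hs⟩)

/-- The classes are `{e₀}`, `{e₁}` and the nonloops outside `{e₀, e₁}`; under the hypotheses of
the theorem the last one is the parallel class of `i`. -/
def MeetsTwoClasses (e₀ e₁ : Fin n) (A : Finset (Fin n)) : Prop :=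
  (e₀ ∈ A ∧ e₁ ∈ A) ∨ ∃ z ∈ A, z ≠ e₀ ∧ z ≠ e₁ ∧ M.r {z} ≠ 0 ∧ (e₀ ∈ A ∨ e₁ ∈ A)

variable {M} in
theorem MeetsTwoClasses.mem_or {e₀ e₁ : Fin n} {A : Finset (Fin n)}
    (h : M.MeetsTwoClasses e₀ e₁ A) : e₀ ∈ A ∨ e₁ ∈ A := by
  rcases h with ⟨h₀, -⟩ | ⟨-, -, -, -, -, h⟩
  exacts [Or.inl h₀, h]

variable {M} in
theorem loop_of_not_meetsTwoClasses {e₀ e₁ : Fin n} {A : Finset (Fin n)}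
    (hA : ¬M.MeetsTwoClasses e₀ e₁ A) (he : e₀ ∈ A ∨ e₁ ∈ A) :
    ∀ z ∈ A, z ≠ e₀ → z ≠ e₁ → M.r {z} = 0 :=
  fun z hz hz₀ hz₁ => by_contra fun hzl => hA (Or.inr ⟨z, hz, hz₀, hz₁, hzl, he⟩)

end MatroidRk

section ThreePointLine
variable {n : ℕ} {M : MatroidRk n} {e₀ e₁ i : Fin n}
  (hcirc : M.IsCircuit {e₀, e₁, i}) (h₀₁ : e₀ ≠ e₁) (hi : i ∉ ({e₀, e₁} : Finset (Fin n)))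
include hcirc h₀₁ hi

theorem rank_pair_e₀_e₁ : M.r {e₀, e₁} = 2 := by
  simpa [h₀₁] using
    hcirc.rank_eq_card hi (by intro a; simp only [mem_insert, mem_singleton]; tauto)

theorem rank_pair_e₀_i : M.r {e₀, i} = 2 := by
  simp only [mem_insert, mem_singleton, not_or] at hi
  simpa [Ne.symm hi.1] using hcirc.rank_eq_card (s := {e₀, i}) (z := e₁)
    (by simp [h₀₁.symm, Ne.symm hi.2]) (by intro a; simp only [mem_insert, mem_singleton]; tauto)

theorem rank_pair_e₁_i : M.r {e₁, i} = 2 := by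
  simp only [mem_insert, mem_singleton, not_or] at hi
  simpa [Ne.symm hi.2] using hcirc.rank_eq_card (s := {e₁, i}) (z := e₀)
    (by simp [h₀₁, Ne.symm hi.1]) (by intro a; simp only [mem_insert, mem_singleton]; tauto)

theorem rank_singleton_e₀ : M.r {e₀} = 1 :=
  M.rank_singleton_of_rank_pair_eq_two (rank_pair_e₀_e₁ hcirc h₀₁ hi)

theorem rank_singleton_e₁ : M.r {e₁} = 1 :=
  M.rank_singleton_of_rank_pair_eq_two (by rw [pair_comm]; exact rank_pair_e₀_e₁ hcirc h₀₁ hi)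

theorem rank_singleton_i : M.r {i} = 1 :=
  M.rank_singleton_of_rank_pair_eq_two (by rw [pair_comm]; exact rank_pair_e₀_i hcirc h₀₁ hi)

variable (hpar : ∀ j ∉ ({e₀, e₁, i} : Finset (Fin n)), M.Parallel j i ∨ M.IsLoop j)
include hpar

theorem rank_pair_i_of_nonloop {z : Fin n} (hz₀ : z ≠ e₀) (hz₁ : z ≠ e₁) (hz : M.r {z} ≠ 0) :
    M.r {z, i} = 1 := by
  by_cases hzi : z = i
  · rw [hzi, pair_eq_singleton]
    exact rank_singleton_i hcirc h₀₁ hi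
  · rcases hpar z (by simp [hz₀, hz₁, hzi]) with h | h
    · exact h.2.2.2
    · exact absurd h hz

theorem rank_singleton_of_nonloop {z : Fin n} (hz₀ : z ≠ e₀) (hz₁ : z ≠ e₁)
    (hz : M.r {z} ≠ 0) : M.r {z} = 1 := by
  have := M.mono (show {z} ⊆ ({z, i} : Finset (Fin n)) by simp)
  rw [rank_pair_i_of_nonloop hcirc h₀₁ hi hpar hz₀ hz₁ hz] at this
  omega

theorem two_le_rank_pair_of_nonloop {e z : Fin n} (he : M.r {e, i} = 2) (hz₀ : z ≠ e₀)
    (hz₁ : z ≠ e₁) (hz : M.r {z} ≠ 0) : 2 ≤ M.r {e, z} := by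
  have hzi := rank_pair_i_of_nonloop hcirc h₀₁ hi hpar hz₀ hz₁ hz
  have := M.mono (show {z} ⊆ ({z, i} : Finset (Fin n)) by simp)
  exact he ▸ M.rank_pair_le_of_rank_pair_le (by omega)

theorem rank_pair_le_one_of_nonloop {z z' : Fin n} (hz₀ : z ≠ e₀) (hz₁ : z ≠ e₁)
    (hz : M.r {z} ≠ 0) (hz'₀ : z' ≠ e₀) (hz'₁ : z' ≠ e₁) (hz' : M.r {z'} ≠ 0) :
    M.r {z', z} ≤ 1 := by
  have hz'i := rank_pair_i_of_nonloop hcirc h₀₁ hi hpar hz'₀ hz'₁ hz'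
  have hiz : M.r {i, z} ≤ M.r {i} := by
    rw [pair_comm, rank_pair_i_of_nonloop hcirc h₀₁ hi hpar hz₀ hz₁ hz,
      rank_singleton_i hcirc h₀₁ hi]
  exact hz'i ▸ M.rank_pair_le_of_rank_pair_le hiz

theorem rank_eq_one_of_nonloop {A : Finset (Fin n)} (h₀ : e₀ ∉ A) (h₁ : e₁ ∉ A) {z : Fin n}
    (hz : z ∈ A) (hzl : M.r {z} ≠ 0) : M.r A = 1 := by
  have hz₀ := ne_of_mem_of_not_mem hz h₀
  have hz₁ := ne_of_mem_of_not_mem hz h₁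
  have hz1 := rank_singleton_of_nonloop hcirc h₀₁ hi hpar hz₀ hz₁ hzl
  rw [M.rank_eq_of_forall_rank_pair_le hz fun j hj => ?_, hz1]
  by_cases hjl : M.r {j} = 0
  · exact M.rank_insert_le_of_loop hjl {z}
  · exact hz1 ▸ rank_pair_le_one_of_nonloop hcirc h₀₁ hi hpar hz₀ hz₁ hzl
      (ne_of_mem_of_not_mem hj h₀) (ne_of_mem_of_not_mem hj h₁) hjl

theorem rank_eq_two_of_meetsTwoClasses (hrk : M.r univ = 2) {A : Finset (Fin n)}
    (hA : M.MeetsTwoClasses e₀ e₁ A) : M.r A = 2 := by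
  refine le_antisymm (hrk ▸ M.mono (subset_univ A)) ?_
  rcases hA with ⟨h₀, h₁⟩ | ⟨z, hz, hz₀, hz₁, hzl, h₀ | h₁⟩
  · exact (rank_pair_e₀_e₁ hcirc h₀₁ hi).ge.trans
      (M.mono (insert_subset h₀ (singleton_subset_iff.2 h₁)))
  · exact (two_le_rank_pair_of_nonloop hcirc h₀₁ hi hpar (rank_pair_e₀_i hcirc h₀₁ hi)
      hz₀ hz₁ hzl).trans (M.mono (insert_subset h₀ (singleton_subset_iff.2 hz)))
  · exact (two_le_rank_pair_of_nonloop hcirc h₀₁ hi hpar (rank_pair_e₁_i hcirc h₀₁ hi)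
      hz₀ hz₁ hzl).trans (M.mono (insert_subset h₁ (singleton_subset_iff.2 hz)))

end ThreePointLine

section LineModel
variable {n V m : ℕ} (qW : Fin m → ℝ) (qY : Fin V → ℝ)

/-- The law of `ω = ((u, w), y)`: `u` uniform on `Fin V`, `w ∼ qW`, `y ∼ qY`, independent. -/
noncomputable def linePMF : (Fin V × Fin m) × Fin V → ℝ :=
  fun ω => (V : ℝ)⁻¹ * qW ω.1.2 * qY ω.2

def lineShear (ω : (Fin V × Fin m) × Fin V) : Fin V × Fin m := (ω.1.1 + ω.2, ω.1.2)

def lineVar (M : MatroidRk n) (e₀ e₁ j : Fin n) (ω : (Fin V × Fin m) × Fin V) : ℕ :=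
  if j = e₀ then Encodable.encode ω.1
  else if j = e₁ then Encodable.encode (lineShear ω)
  else if M.r {j} = 0 then 0
  else Encodable.encode ω.2

variable {qW qY}

theorem linePMF_nonneg (hW : ∀ w, 0 ≤ qW w) (hY : ∀ y, 0 ≤ qY y)
    (ω : (Fin V × Fin m) × Fin V) : 0 ≤ linePMF qW qY ω :=
  mul_nonneg (mul_nonneg (by positivity) (hW _)) (hY _)

theorem eq_of_lineShear_eq_of_fst_eq {ω ω' : (Fin V × Fin m) × Fin V}
    (h₁ : lineShear ω' = lineShear ω) (h₀ : ω'.1 = ω.1) : ω' = ω := by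
  simp only [lineShear, Prod.ext_iff] at h₀ h₁ ⊢
  exact ⟨h₀, by simpa [h₀.1] using h₁.1⟩

theorem eq_of_lineShear_eq_of_snd_eq {ω ω' : (Fin V × Fin m) × Fin V}
    (h₁ : lineShear ω' = lineShear ω) (h₂ : ω'.2 = ω.2) : ω' = ω := by
  simp only [lineShear, Prod.ext_iff] at h₁ h₂ ⊢
  exact ⟨⟨by simpa [h₂] using h₁.1, h₁.2⟩, h₂⟩

theorem forall_lineVar_eq_iff {M : MatroidRk n} {e₀ e₁ : Fin n} (h₀₁ : e₀ ≠ e₁)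
    (A : Finset (Fin n)) (ω ω' : (Fin V × Fin m) × Fin V) :
    (∀ j ∈ A, lineVar M e₀ e₁ j ω' = lineVar M e₀ e₁ j ω) ↔
      (e₀ ∈ A → ω'.1 = ω.1) ∧ (e₁ ∈ A → lineShear ω' = lineShear ω) ∧
        (∀ j ∈ A, j ≠ e₀ → j ≠ e₁ → M.r {j} ≠ 0 → ω'.2 = ω.2) := by
  constructor
  · intro h
    refine ⟨fun h₀ => ?_, fun h₁ => ?_, fun j hj hj₀ hj₁ hjl => ?_⟩
    · simpa [lineVar] using h e₀ h₀
    · simpa [lineVar, h₀₁.symm] using h e₁ h₁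
    · simpa [lineVar, hj₀, hj₁, hjl] using h j hj
  · rintro ⟨h₀, h₁, hY⟩ j hj
    unfold lineVar
    split_ifs with hj₀ hj₁ hjl
    · rw [h₀ (hj₀ ▸ hj)]
    · rw [h₁ (hj₁ ▸ hj)]
    · rfl
    · rw [hY j hj hj₀ hj₁ hjl]

theorem eq_of_forall_lineVar_eq {M : MatroidRk n} {e₀ e₁ : Fin n} (h₀₁ : e₀ ≠ e₁)
    {A : Finset (Fin n)} (hA : M.MeetsTwoClasses e₀ e₁ A) {ω ω' : (Fin V × Fin m) × Fin V}
    (h : ∀ j ∈ A, lineVar M e₀ e₁ j ω' = lineVar M e₀ e₁ j ω) : ω' = ω := by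
  obtain ⟨h₀', h₁', hY'⟩ := (forall_lineVar_eq_iff h₀₁ A ω ω').1 h
  rcases hA with ⟨h₀, h₁⟩ | ⟨z, hz, hz₀, hz₁, hzl, h₀ | h₁⟩
  · exact eq_of_lineShear_eq_of_fst_eq (h₁' h₁) (h₀' h₀)
  · exact Prod.ext (h₀' h₀) (hY' z hz hz₀ hz₁ hzl)
  · exact eq_of_lineShear_eq_of_snd_eq (h₁' h₁) (hY' z hz hz₀ hz₁ hzl)

variable [NeZero V]

theorem sum_uniform_prod (hW : ∑ w, qW w = 1) :
    ∑ z : Fin V × Fin m, (V : ℝ)⁻¹ * qW z.2 = 1 := by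
  simp [Fintype.sum_prod_type, ← mul_sum, hW, NeZero.ne V]

theorem Hent_uniform_prod (hW : ∑ w, qW w = 1) :
    Hent (fun z : Fin V × Fin m => (V : ℝ)⁻¹ * qW z.2) id = log V + Hent qW id := by
  rw [Hent_prod_id (fun _ : Fin V => (V : ℝ)⁻¹) qW (by simp [NeZero.ne V]) hW, Hent_uniform]

theorem sum_linePMF (hW : ∑ w, qW w = 1) (hY : ∑ y, qY y = 1) :
    ∑ ω, linePMF qW qY ω = 1 := by
  rw [← sum_uniform_prod (V := V) hW, Fintype.sum_prod_type]
  simp [linePMF, ← mul_sum, hY]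

theorem Hent_linePMF_fst (hW : ∑ w, qW w = 1) (hY : ∑ y, qY y = 1) :
    Hent (linePMF qW qY) Prod.fst = log V + Hent qW id :=
  (Hent_prod_fst (fun z : Fin V × Fin m => (V : ℝ)⁻¹ * qW z.2) qY hY).trans
    (Hent_uniform_prod hW)

theorem Hent_linePMF_snd (hW : ∑ w, qW w = 1) :
    Hent (linePMF qW qY) Prod.snd = Hent qY id :=
  Hent_prod_snd (fun z : Fin V × Fin m => (V : ℝ)⁻¹ * qW z.2) qY (sum_uniform_prod hW)

theorem Hent_linePMF_id (hW : ∑ w, qW w = 1) (hY : ∑ y, qY y = 1) :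
    Hent (linePMF qW qY) id = log V + Hent qW id + Hent qY id :=
  (Hent_prod_id (fun z : Fin V × Fin m => (V : ℝ)⁻¹ * qW z.2) qY (sum_uniform_prod hW) hY).trans
    (by rw [Hent_uniform_prod hW])

theorem Hent_linePMF_lineShear (hW : ∑ w, qW w = 1) (hY : ∑ y, qY y = 1) :
    Hent (linePMF qW qY) lineShear = log V + Hent qW id := by
  -- the shear `(u, w, y) ↦ (u - y, w, y)` preserves `linePMF` and turns `lineShear` into `Prod.fst`
  let e : (Fin V × Fin m) × Fin V ≃ (Fin V × Fin m) × Fin V :=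
    { toFun := fun ω => ((ω.1.1 - ω.2, ω.1.2), ω.2)
      invFun := fun ω => ((ω.1.1 + ω.2, ω.1.2), ω.2)
      left_inv := fun ω => by simp
      right_inv := fun ω => by simp }
  rw [← Hent_comp_equiv e, ← Hent_linePMF_fst hW hY]
  congr 1
  funext ω
  simp [e, lineShear]

end LineModel

section
variable {n V m : ℕ} [NeZero V] {M : MatroidRk n} {e₀ e₁ i : Fin n}
  {qW : Fin m → ℝ} {qY : Fin V → ℝ} {a b : ℝ}
  (hcirc : M.IsCircuit {e₀, e₁, i}) (h₀₁ : e₀ ≠ e₁) (hi : i ∉ ({e₀, e₁} : Finset (Fin n)))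
  (hpar : ∀ j ∉ ({e₀, e₁, i} : Finset (Fin n)), M.Parallel j i ∨ M.IsLoop j)
  (hW : ∑ w, qW w = 1) (hY : ∑ y, qY y = 1) (ha : Hent qY id = a)
include hcirc h₀₁ hi hpar hW hY ha

theorem Hent_joint_lineVar_of_not_mem {A : Finset (Fin n)} (h₀ : e₀ ∉ A) (h₁ : e₁ ∉ A) :
    Hent (linePMF qW qY) (joint (lineVar M e₀ e₁) A) = a * M.r A := by
  have hrel := forall_lineVar_eq_iff (M := M) (V := V) (m := m) h₀₁ A
  by_cases hnl : ∃ z ∈ A, M.r {z} ≠ 0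
  · obtain ⟨z, hz, hzl⟩ := hnl
    have hY' (ω ω' : (Fin V × Fin m) × Fin V) :
        (∀ j ∈ A, j ≠ e₀ → j ≠ e₁ → M.r {j} ≠ 0 → ω'.2 = ω.2) ↔ ω'.2 = ω.2 :=
      ⟨fun h => h z hz (ne_of_mem_of_not_mem hz h₀) (ne_of_mem_of_not_mem hz h₁) hzl,
        fun h _ _ _ _ _ => h⟩
    rw [Hent_joint_congr (Y := Prod.snd) _ fun ω ω' => (hrel ω ω').trans (by simp [h₀, h₁, hY']),
      Hent_linePMF_snd hW, ha, rank_eq_one_of_nonloop hcirc h₀₁ hi hpar h₀ h₁ hz hzl]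
    simp
  · push Not at hnl
    rw [Hent_joint_congr (Y := fun _ => ()) _ fun ω ω' =>
        (hrel ω ω').trans (by simp +contextual [h₀, h₁, hnl]),
      Hent_const _ (sum_linePMF hW hY), M.rank_eq_zero_of_forall_loop hnl]
    simp

theorem Hent_joint_lineVar (hrk : M.r univ = 2) (hab : log V + Hent qW id = a + b)
    (A : Finset (Fin n)) :
    Hent (linePMF qW qY) (joint (lineVar M e₀ e₁) A) =
      a * M.r A + b * (if e₀ ∈ A ∨ e₁ ∈ A then 1 else 0) := by
  have hrel := forall_lineVar_eq_iff (M := M) (V := V) (m := m) h₀₁ A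
  by_cases hA : M.MeetsTwoClasses e₀ e₁ A
  · rw [Hent_joint_congr (X := lineVar M e₀ e₁) (Y := id) _ fun ω ω' =>
        ⟨eq_of_forall_lineVar_eq h₀₁ hA, fun h _ _ => by rw [show ω' = ω from h]⟩,
      Hent_linePMF_id hW hY, hab, ha, rank_eq_two_of_meetsTwoClasses hcirc h₀₁ hi hpar hrk hA,
      if_pos hA.mem_or]
    push_cast
    ring
  by_cases h₀ : e₀ ∈ A
  · have h₁ : e₁ ∉ A := fun h₁ => hA (Or.inl ⟨h₀, h₁⟩)
    have hloop := M.loop_of_not_meetsTwoClasses hA (Or.inl h₀)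
    rw [Hent_joint_congr (Y := Prod.fst) _ fun ω ω' =>
        (hrel ω ω').trans (by simp +contextual [h₀, h₁, hloop]),
      Hent_linePMF_fst hW hY, hab, if_pos (Or.inl h₀),
      M.rank_eq_of_forall_ne_loop h₀ fun j hj hj₀ => hloop j hj hj₀ (ne_of_mem_of_not_mem hj h₁),
      rank_singleton_e₀ hcirc h₀₁ hi]
    push_cast
    ring
  by_cases h₁ : e₁ ∈ A
  · have hloop := M.loop_of_not_meetsTwoClasses hA (Or.inr h₁)
    rw [Hent_joint_congr (Y := lineShear) _ fun ω ω' =>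
        (hrel ω ω').trans (by simp +contextual [h₀, h₁, hloop]),
      Hent_linePMF_lineShear hW hY, hab, if_pos (Or.inr h₁),
      M.rank_eq_of_forall_ne_loop h₁ fun j hj hj₁ => hloop j hj (ne_of_mem_of_not_mem hj h₀) hj₁,
      rank_singleton_e₁ hcirc h₀₁ hi]
    push_cast
    ring
  rw [Hent_joint_lineVar_of_not_mem hcirc h₀₁ hi hpar hW hY ha h₀ h₁, if_neg (by tauto)]
  ring

end

theorem rUone_two {n : ℕ} (hn : 2 ≤ n) (A : Finset (Fin n)) :
    rUone n 2 A = if (⟨0, by omega⟩ : Fin n) ∈ A ∨ ⟨1, by omega⟩ ∈ A then 1 else 0 := by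
  have : alphaSet n 2 = {⟨0, by omega⟩, ⟨1, by omega⟩} := by
    ext x
    simp [alphaSet, Fin.ext_iff]
    omega
  simp [rUone, this, Finset.Nonempty, and_or_left, exists_or]

/-- Matúš-type inner bound: for `M` of rank 2 spanning an extreme ray of
`Γ_n` with a circuit `{1,2,i}` such that every other element is parallel to `i` or a loop,
if `v ∈ χ_M`, `log(v-1) < a ≤ log v` and `a + b ≥ log v` with `b ≥ 0`, then
`a·r_M + b·r_{U_{1,2}^n}` is entropic. -/
theorem stmt10 (n : ℕ) (hn : 2 ≤ n) (M : MatroidRk n)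
    (hrk : M.r Finset.univ = 2)
    (hC : ∃ i : Fin n, i ∉ ({⟨0, by omega⟩, ⟨1, by omega⟩} : Finset (Fin n)) ∧
      M.IsCircuit {⟨0, by omega⟩, ⟨1, by omega⟩, i} ∧
      ∀ j : Fin n, j ∉ ({⟨0, by omega⟩, ⟨1, by omega⟩, i} : Finset (Fin n)) →
        M.Parallel j i ∨ M.IsLoop j)
    (v : ℤ) (hv : v ∈ chi M) (a b : ℝ)
    (ha1 : Real.log ((v : ℝ) - 1) < a) (ha2 : a ≤ Real.log (v : ℝ))
    (hab : Real.log (v : ℝ) ≤ a + b) :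
    IsEntropic (fun A => a * M.rr A + b * rUone n 2 A) := by
  obtain ⟨i, hi, hcirc, hpar⟩ := hC
  have hv₂ := hv.1
  lift v to ℕ using by omega
  have : NeZero v := ⟨by omega⟩
  push_cast at ha1 ha2 hab
  have hv₁ : (1 : ℝ) ≤ v - 1 := by linarith [show (2 : ℝ) ≤ v by exact_mod_cast hv₂]
  have ha₀ : 0 ≤ a := (log_nonneg hv₁).trans ha1.le
  obtain ⟨qY, hqY₀, hqY, hHY⟩ := exists_pmf_Hent_eq ha₀ ha2
  obtain ⟨m, qW, hqW₀, hqW, hHW⟩ := exists_pmf_Hent_eq_of_nonneg (sub_nonneg.2 hab)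
  refine isEntropic_of_fintype _ (lineVar M ⟨0, by omega⟩ ⟨1, by omega⟩)
    (linePMF_nonneg hqW₀ hqY₀) (sum_linePMF hqW hqY) fun A => ?_
  rw [Hent_joint_lineVar (b := b) hcirc (by simp [Fin.ext_iff]) hi hpar hqW hqY hHY hrk
    (by rw [hHW]; ring) A, rUone_two hn]
  rfl
end

section
/- Let m ≥ 2 and let X_1,…,X_m be random variables on a common probability space, each taking finitely many values, satisfying H(X_{K∪{i}}) + H(X_{K∪{j}}) = H(X_K) + H(X_{K∪{i,j}}) for all distinct i, j ∈ {1,…,m} and all K ⊆ {1,…,m} \ {i,j}. Suppose moreover that P(X_1 = x_1) = P(X_2 = x_2) = … = P(X_m = x_m) for every (x_1,…,x_m) with P(X_1 = x_1, …, X_m = x_m) > 0. Form the m-partite graph whose vertices are the pairs (i, x) with P(X_i = x) > 0, with an edge between (i, x) and (j, y) for i ≠ j if and only if P(X_i = x, X_j = y) > 0. Then the supports of X_1,…,X_m all have the same cardinality, and any two vertices (i, x) and (j, y) lying in the same connected component satisfy P(X_i = x) = P(X_j = y). -/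
open Finset

/-!
An atom of positive mass makes the marginals of all its coordinates equal, so adjacent vertices
carry the same probability, and this propagates along paths. For the cardinalities, double count
`∑_{x,y} P(X_i = x, X_j = y) / P(X_i = x)`: its denominators may be replaced by `P(X_j = y)`
because the two agree wherever the numerator is nonzero, and summing out `y`, respectively `x`,
gives `|supp X_i|`, respectively `|supp X_j|`.
-/

section Marginals

variable {Ω α β : Type*} [Fintype Ω] [DecidableEq α] [DecidableEq β] (p : Ω → ℝ)

def probEq (X : Ω → α) (x : α) : ℝ :=
  ∑ ω ∈ univ.filter (fun ω => X ω = x), p ω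

def jointProb (X : Ω → α) (Y : Ω → β) (x : α) (y : β) : ℝ :=
  ∑ ω ∈ univ.filter (fun ω => X ω = x ∧ Y ω = y), p ω

noncomputable def posSupport (X : Ω → α) : Finset α :=
  (univ.image X).filter (fun x => 0 < probEq p X x)

variable {p}

lemma jointProb_comm (X : Ω → α) (Y : Ω → β) (x : α) (y : β) :
    jointProb p X Y x y = jointProb p Y X y x := by
  simp only [jointProb, and_comm]

lemma jointProb_nonneg (hp : ∀ ω, 0 ≤ p ω) (X : Ω → α) (Y : Ω → β) (x : α) (y : β) :
    0 ≤ jointProb p X Y x y :=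
  sum_nonneg fun ω _ => hp ω

lemma jointProb_le_probEq_right (hp : ∀ ω, 0 ≤ p ω) (X : Ω → α) (Y : Ω → β) (x : α) (y : β) :
    jointProb p X Y x y ≤ probEq p Y y :=
  sum_le_sum_of_subset_of_nonneg (monotone_filter_right _ fun _ _ h => h.2)
    fun ω _ _ => hp ω

lemma sum_jointProb_image_right (X : Ω → α) (Y : Ω → β) (x : α) :
    ∑ y ∈ univ.image Y, jointProb p X Y x y = probEq p X x := by
  rw [probEq, ← sum_fiberwise_of_maps_to (g := Y) fun ω _ => mem_image_of_mem Y (mem_univ ω)]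
  simp only [jointProb, filter_filter]

lemma sum_jointProb_posSupport_right (hp : ∀ ω, 0 ≤ p ω) (X : Ω → α) (Y : Ω → β) (x : α) :
    ∑ y ∈ posSupport p Y, jointProb p X Y x y = probEq p X x := by
  rw [← sum_jointProb_image_right X Y x]
  refine sum_subset (filter_subset _ _) fun y hy hy_null => ?_
  have hy_zero : probEq p Y y = 0 :=
    (not_lt.mp fun hpos => hy_null (mem_filter.mpr ⟨hy, hpos⟩)).antisymm
      (sum_nonneg fun ω _ => hp ω)
  exact (hy_zero ▸ jointProb_le_probEq_right hp X Y x y).antisymm (jointProb_nonneg hp X Y x y)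

lemma sum_jointProb_posSupport_left (hp : ∀ ω, 0 ≤ p ω) (X : Ω → α) (Y : Ω → β) (y : β) :
    ∑ x ∈ posSupport p X, jointProb p X Y x y = probEq p Y y := by
  simp only [jointProb_comm X Y, sum_jointProb_posSupport_right hp]

theorem card_posSupport_eq_of_probEq_eq (hp : ∀ ω, 0 ≤ p ω) (X : Ω → α) (Y : Ω → β)
    (h : ∀ x y, 0 < jointProb p X Y x y → probEq p X x = probEq p Y y) :
    #(posSupport p X) = #(posSupport p Y) := by
  have hratio : ∀ x y,
      jointProb p X Y x y / probEq p X x = jointProb p X Y x y / probEq p Y y := by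
    intro x y
    rcases (jointProb_nonneg hp X Y x y).eq_or_lt with hzero | hpos
    · simp [← hzero]
    · rw [h x y hpos]
  have hreal : (#(posSupport p X) : ℝ) = #(posSupport p Y) := calc
    (#(posSupport p X) : ℝ)
      = ∑ x ∈ posSupport p X, ∑ y ∈ posSupport p Y, jointProb p X Y x y / probEq p X x := by
        rw [card_eq_sum_ones, Nat.cast_sum, Nat.cast_one]
        refine sum_congr rfl fun x hx => ?_
        rw [← sum_div, sum_jointProb_posSupport_right hp, div_self (mem_filter.mp hx).2.ne']
    _ = ∑ y ∈ posSupport p Y, ∑ x ∈ posSupport p X, jointProb p X Y x y / probEq p Y y := by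
        simp only [hratio]
        exact sum_comm
    _ = #(posSupport p Y) := by
        rw [card_eq_sum_ones, Nat.cast_sum, Nat.cast_one]
        refine sum_congr rfl fun y hy => ?_
        rw [← sum_div, sum_jointProb_posSupport_left hp, div_self (mem_filter.mp hy).2.ne']
  exact_mod_cast hreal

end Marginals

section Family

variable {Ω ι α : Type*} [Fintype Ω] [DecidableEq α] {p : Ω → ℝ} {X : ι → Ω → α}

theorem probEq_eq_of_jointProb_pos (hp : ∀ ω, 0 ≤ p ω)
    (hatom : ∀ ω, 0 < p ω → ∀ i j, probEq p (X i) (X i ω) = probEq p (X j) (X j ω))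
    {i j : ι} {x y : α} (hpos : 0 < jointProb p (X i) (X j) x y) :
    probEq p (X i) x = probEq p (X j) y := by
  obtain ⟨ω, hω, hpω⟩ := exists_ne_zero_of_sum_ne_zero hpos.ne'
  obtain ⟨rfl, rfl⟩ := (mem_filter.mp hω).2
  exact hatom ω ((hp ω).lt_of_ne' hpω) i j

theorem probEq_eq_of_reflTransGen {R : ι × α → ι × α → Prop}
    (hR : ∀ u w, R u w → probEq p (X u.1) u.2 = probEq p (X w.1) w.2) {u w : ι × α}
    (huw : Relation.ReflTransGen R u w) :
    probEq p (X u.1) u.2 = probEq p (X w.1) w.2 := by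
  simpa [Relation.reflTransGen_eq_self] using huw.lift (fun v => probEq p (X v.1) v.2) hR

end Family

theorem stmt13_general (m : ℕ) (Ω : Type) [Fintype Ω]
    (p : Ω → ℝ) (hp0 : ∀ ω, 0 ≤ p ω)
    (X : Fin m → Ω → ℕ)
    (hunif : ∀ f : Fin m → ℕ,
      0 < ∑ ω ∈ Finset.univ.filter (fun ω => ∀ i, X i ω = f i), p ω →
      ∀ i j : Fin m,
        (∑ ω ∈ Finset.univ.filter (fun ω => X i ω = f i), p ω) =
        (∑ ω ∈ Finset.univ.filter (fun ω => X j ω = f j), p ω)) :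
    (∀ i j : Fin m,
      ((Finset.univ.image (X i)).filter
        (fun x => 0 < ∑ ω ∈ Finset.univ.filter (fun ω => X i ω = x), p ω)).card =
      ((Finset.univ.image (X j)).filter
        (fun x => 0 < ∑ ω ∈ Finset.univ.filter (fun ω => X j ω = x), p ω)).card) ∧
    (∀ i j : Fin m, ∀ x y : ℕ,
      0 < (∑ ω ∈ Finset.univ.filter (fun ω => X i ω = x), p ω) →
      0 < (∑ ω ∈ Finset.univ.filter (fun ω => X j ω = y), p ω) →
      Relation.ReflTransGen
        (fun (u w : Fin m × ℕ) => u.1 ≠ w.1 ∧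
          0 < ∑ ω ∈ Finset.univ.filter (fun ω => X u.1 ω = u.2 ∧ X w.1 ω = w.2), p ω)
        (i, x) (j, y) →
      (∑ ω ∈ Finset.univ.filter (fun ω => X i ω = x), p ω) =
      (∑ ω ∈ Finset.univ.filter (fun ω => X j ω = y), p ω)) := by
  have hatom : ∀ ω, 0 < p ω → ∀ i j, probEq p (X i) (X i ω) = probEq p (X j) (X j ω) :=
    fun ω hω => hunif (X · ω) (hω.trans_le (single_le_sum (fun ω' _ => hp0 ω') (by simp)))
  exact ⟨fun i j => card_posSupport_eq_of_probEq_eq hp0 (X i) (X j) fun _ _ =>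
      probEq_eq_of_jointProb_pos hp0 hatom,
    fun _ _ _ _ _ _ hconn => probEq_eq_of_reflTransGen
      (fun _ _ hedge => probEq_eq_of_jointProb_pos hp0 hatom hedge.2) hconn⟩

/-- under the modular entropy equalities and the uniformity condition, all
supports have the same cardinality and within a connected component all vertex
probabilities coincide. -/
theorem stmt13 (m : ℕ) (hm : 2 ≤ m) (Ω : Type) [Fintype Ω]
    (p : Ω → ℝ) (hp0 : ∀ ω, 0 ≤ p ω) (hp1 : ∑ ω, p ω = 1)
    (X : Fin m → Ω → ℕ)
    (hmod : ∀ i j : Fin m, i ≠ j → ∀ K : Finset (Fin m), i ∉ K → j ∉ K →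
      Hent p (joint X (insert i K)) + Hent p (joint X (insert j K)) =
        Hent p (joint X K) + Hent p (joint X (insert i (insert j K))))
    (hunif : ∀ f : Fin m → ℕ,
      0 < ∑ ω ∈ Finset.univ.filter (fun ω => ∀ i, X i ω = f i), p ω →
      ∀ i j : Fin m,
        (∑ ω ∈ Finset.univ.filter (fun ω => X i ω = f i), p ω) =
        (∑ ω ∈ Finset.univ.filter (fun ω => X j ω = f j), p ω)) :
    (∀ i j : Fin m,
      ((Finset.univ.image (X i)).filter
        (fun x => 0 < ∑ ω ∈ Finset.univ.filter (fun ω => X i ω = x), p ω)).card =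
      ((Finset.univ.image (X j)).filter
        (fun x => 0 < ∑ ω ∈ Finset.univ.filter (fun ω => X j ω = x), p ω)).card) ∧
    (∀ i j : Fin m, ∀ x y : ℕ,
      0 < (∑ ω ∈ Finset.univ.filter (fun ω => X i ω = x), p ω) →
      0 < (∑ ω ∈ Finset.univ.filter (fun ω => X j ω = y), p ω) →
      Relation.ReflTransGen
        (fun (u w : Fin m × ℕ) => u.1 ≠ w.1 ∧
          0 < ∑ ω ∈ Finset.univ.filter (fun ω => X u.1 ω = u.2 ∧ X w.1 ω = w.2), p ω)
        (i, x) (j, y) →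
      (∑ ω ∈ Finset.univ.filter (fun ω => X i ω = x), p ω) =
      (∑ ω ∈ Finset.univ.filter (fun ω => X j ω = y), p ω)) :=
  stmt13_general m Ω p hp0 X hunif
end
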